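/- Let G = (V,E) be an r-graph on vertex set [n] and let x = (x_1,…,x_n) be an optimal weighting for G whose nonzero weights are exactly x_1,…,x_k (k ≤ n) and whose number of nonzero entries is minimal among all optimal weightings for G. Then for every pair {i,j} of distinct indices in [k]: (a) λ(E_i, x) = λ(E_j, x) = r·λ(G), and (b) there is an edge of G containing both i and j. -/

import Mathlib

/-! Moving weight `t` from `j` to `i` changes `λ(G,x)` by
`t (λ(E_i,x) - λ(E_j,x)) - t² λ(E_ij,x)`. At an optimum with `x_j > 0`, small `t > 0` forces
`λ(E_i,x) ≤ λ(E_j,x)`, so the `λ(E_i,x)` agree on the support, and Euler's identity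
`∑ x_i λ(E_i,x) = r λ(G,x)` identifies the common value. If no edge contained both `i` and `j`,
the change would vanish identically, and `t = x_j` would give an optimal weighting with
smaller support. -/

/-- `lagEval E x` is λ(G,x): the sum over the edges of `E` of the product of the
weights (under `x`) of their vertices. -/
def lagEval (E : Finset (Finset ℕ)) (x : ℕ → ℝ) : ℝ :=
  ∑ e ∈ E, ∏ i ∈ e, x i

/-- A feasible weighting: nonnegative entries, finitely supported, total weight 1. -/
def Feasible (x : ℕ → ℝ) : Prop :=
  (∀ i, 0 ≤ x i) ∧ ∃ S : Finset ℕ, (∀ i ∉ S, x i = 0) ∧ ∑ i ∈ S, x i = 1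

/-- A feasible weighting on the vertex set [n] = {1,…,n}. -/
def FeasibleOn (n : ℕ) (x : ℕ → ℝ) : Prop :=
  (∀ i, 0 ≤ x i) ∧ (∀ i ∉ Finset.Icc 1 n, x i = 0) ∧ ∑ i ∈ Finset.Icc 1 n, x i = 1

/-- The Lagrangian λ(G) of a hypergraph with edge set `E`: the supremum (in fact
maximum) of λ(G,x) over all feasible weightings `x`. -/
noncomputable def lagrangian (E : Finset (Finset ℕ)) : ℝ :=
  sSup {y : ℝ | ∃ x : ℕ → ℝ, Feasible x ∧ lagEval E x = y}

/-- `completeG s r` is [s]^{(r)}, the complete r-graph on {1,…,s}. -/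
def completeG (s r : ℕ) : Finset (Finset ℕ) :=
  (Finset.Icc 1 s).powersetCard r

/-- `E` is (the edge set of) an r-graph on the vertex set [n] = {1,…,n}. -/
def IsRGraphOn (r n : ℕ) (E : Finset (Finset ℕ)) : Prop :=
  ∀ e ∈ E, e.card = r ∧ e ⊆ Finset.Icc 1 n

/-- The r-graph `E` contains a clique of order `s` (inside the vertex set `V`):
some `s`-element subset of `V` has all of its `r`-element subsets as edges. -/
def ContainsCliqueOn (V : Finset ℕ) (r s : ℕ) (E : Finset (Finset ℕ)) : Prop :=
  ∃ S : Finset ℕ, S ⊆ V ∧ S.card = s ∧ S.powersetCard r ⊆ E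

/-- `DomLE A B`: `A` and `B` have the same size and, listing both in increasing
order as `i_1 < ⋯ < i_r` and `j_1 < ⋯ < j_r`, one has `i_k ≤ j_k` for all `k`
(equivalently, for every threshold `c`, `A` has at most as many elements above `c`
as `B`). -/
def DomLE (A B : Finset ℕ) : Prop :=
  A.card = B.card ∧
    ∀ c : ℕ, (A.filter fun a => c < a).card ≤ (B.filter fun b => c < b).card

/-- `E` is left-compressed: together with any edge it contains every set of positive
integers dominating it from the left. -/
def LeftCompressed (E : Finset (Finset ℕ)) : Prop :=
  ∀ B ∈ E, ∀ A : Finset ℕ, (∀ a ∈ A, 1 ≤ a) → DomLE A B → A ∈ E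

/-- `nbhd E i` is E_i, the (r-1)-neighborhood of the vertex `i`:
all sets `A` with `i ∉ A` and `A ∪ {i} ∈ E`. -/
def nbhd (E : Finset (Finset ℕ)) (i : ℕ) : Finset (Finset ℕ) :=
  (E.filter fun e => i ∈ e).image fun e => e.erase i

/-- `nbhd2 E i j` is E_{ij}, the (r-2)-neighborhood of the pair of vertices `i, j`. -/
def nbhd2 (E : Finset (Finset ℕ)) (i j : ℕ) : Finset (Finset ℕ) :=
  (E.filter fun e => i ∈ e ∧ j ∈ e).image fun e => (e.erase i).erase j

/-- `C` consists of the first `m` r-element subsets of {1,2,3,…} in the colex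
ordering: it has `m` edges, all of them r-element sets of positive integers, and it
is an initial segment for the colex order. -/
def IsColexSegment (r m : ℕ) (C : Finset (Finset ℕ)) : Prop :=
  C.card = m ∧ (∀ e ∈ C, e.card = r ∧ ∀ a ∈ e, 1 ≤ a) ∧
    ∀ A B : Finset ℕ, A.card = r → (∀ a ∈ A, 1 ≤ a) → B ∈ C →
      toColex A < toColex B → A ∈ C

open Finset

noncomputable def transfer (x : ℕ → ℝ) (i j : ℕ) (t : ℝ) : ℕ → ℝ :=
  x + Pi.single i t - Pi.single j t

section Transfer

variable {x : ℕ → ℝ} {i j : ℕ} {t : ℝ}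

lemma transfer_apply_left (hij : i ≠ j) : transfer x i j t i = x i + t := by
  simp [transfer, hij]

lemma transfer_apply_right (hij : i ≠ j) : transfer x i j t j = x j - t := by
  simp [transfer, hij.symm]

lemma transfer_apply_of_ne {a : ℕ} (hai : a ≠ i) (haj : a ≠ j) : transfer x i j t a = x a := by
  simp [transfer, hai, haj]

lemma prod_transfer_of_notMem {s : Finset ℕ} (hi : i ∉ s) (hj : j ∉ s) :
    ∏ a ∈ s, transfer x i j t a = ∏ a ∈ s, x a :=
  prod_congr rfl fun _ ha => transfer_apply_of_ne (ne_of_mem_of_not_mem ha hi)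
    (ne_of_mem_of_not_mem ha hj)

lemma prod_transfer (hij : i ≠ j) (e : Finset ℕ) :
    ∏ a ∈ e, transfer x i j t a =
      ∏ a ∈ e, x a
        + t * (if i ∈ e then ∏ a ∈ e.erase i, x a else 0)
        - t * (if j ∈ e then ∏ a ∈ e.erase j, x a else 0)
        - t ^ 2 * (if i ∈ e ∧ j ∈ e then ∏ a ∈ (e.erase i).erase j, x a else 0) := by
  by_cases hi : i ∈ e <;> by_cases hj : j ∈ e <;> simp only [hi, hj, if_true, if_false,
    and_true, and_false]
  · have hje : j ∈ e.erase i := mem_erase.mpr ⟨hij.symm, hj⟩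
    have hie : i ∈ e.erase j := mem_erase.mpr ⟨hij, hi⟩
    rw [← mul_prod_erase e _ hi, ← mul_prod_erase _ _ hje,
      prod_transfer_of_notMem (by simp) (by simp), transfer_apply_left hij,
      transfer_apply_right hij, ← mul_prod_erase e x hi, ← mul_prod_erase _ x hje,
      ← mul_prod_erase (e.erase j) x hie, erase_right_comm]
    ring
  · rw [← mul_prod_erase e _ hi, prod_transfer_of_notMem (by simp) (by simp [hj]),
      transfer_apply_left hij, ← mul_prod_erase e x hi]
    ring
  · rw [← mul_prod_erase e _ hj, prod_transfer_of_notMem (by simp [hi]) (by simp),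
      transfer_apply_right hij, ← mul_prod_erase e x hj]
    ring
  · rw [prod_transfer_of_notMem hi hj]
    ring

end Transfer

lemma lagEval_nbhd (E : Finset (Finset ℕ)) (i : ℕ) (x : ℕ → ℝ) :
    lagEval (nbhd E i) x = ∑ e ∈ E with i ∈ e, ∏ a ∈ e.erase i, x a :=
  sum_image fun _ h₁ _ h₂ => erase_injOn' i (mem_filter.mp h₁).2 (mem_filter.mp h₂).2

lemma lagEval_nbhd2 (E : Finset (Finset ℕ)) {i j : ℕ} (hij : i ≠ j) (x : ℕ → ℝ) :
    lagEval (nbhd2 E i j) x = ∑ e ∈ E with i ∈ e ∧ j ∈ e, ∏ a ∈ (e.erase i).erase j, x a := by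
  refine sum_image fun e₁ h₁ e₂ h₂ h => ?_
  obtain ⟨-, hi₁, hj₁⟩ := mem_filter.mp h₁
  obtain ⟨-, hi₂, hj₂⟩ := mem_filter.mp h₂
  exact erase_injOn' i hi₁ hi₂ <| erase_injOn' j (mem_erase.mpr ⟨hij.symm, hj₁⟩)
    (mem_erase.mpr ⟨hij.symm, hj₂⟩) h

lemma lagEval_transfer (E : Finset (Finset ℕ)) (x : ℕ → ℝ) {i j : ℕ} (hij : i ≠ j) (t : ℝ) :
    lagEval E (transfer x i j t) =
      lagEval E x + t * (lagEval (nbhd E i) x - lagEval (nbhd E j) x)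
        - t ^ 2 * lagEval (nbhd2 E i j) x := by
  rw [lagEval_nbhd, lagEval_nbhd, lagEval_nbhd2 E hij, sum_filter, sum_filter, sum_filter,
    lagEval, lagEval, sum_congr rfl fun e _ => prod_transfer hij e]
  simp only [sum_sub_distrib, sum_add_distrib, ← mul_sum]
  ring

lemma feasibleOn_transfer {n : ℕ} {x : ℕ → ℝ} (hx : FeasibleOn n x) {i j : ℕ}
    (hi : i ∈ Icc 1 n) (hj : j ∈ Icc 1 n) (hij : i ≠ j) {t : ℝ} (hti : 0 ≤ x i + t)
    (htj : t ≤ x j) : FeasibleOn n (transfer x i j t) := by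
  obtain ⟨hnonneg, hzero, hsum⟩ := hx
  refine ⟨fun a => ?_, fun a ha => ?_, ?_⟩
  · rcases eq_or_ne a i with rfl | hai
    · rwa [transfer_apply_left hij]
    rcases eq_or_ne a j with rfl | haj
    · rw [transfer_apply_right hij]; linarith
    rw [transfer_apply_of_ne hai haj]; exact hnonneg a
  · rw [transfer_apply_of_ne (ne_of_mem_of_not_mem hi ha).symm
      (ne_of_mem_of_not_mem hj ha).symm, hzero a ha]
  · simp only [transfer, Pi.sub_apply, Pi.add_apply, sum_sub_distrib, sum_add_distrib,
      sum_pi_single', if_pos hi, if_pos hj, hsum]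
    ring

lemma FeasibleOn.mem_Icc {n : ℕ} {x : ℕ → ℝ} (hx : FeasibleOn n x) {a : ℕ} (ha : x a ≠ 0) :
    a ∈ Icc 1 n :=
  by_contra fun h => ha (hx.2.1 a h)

lemma FeasibleOn.pos {n : ℕ} {x : ℕ → ℝ} (hx : FeasibleOn n x) {a : ℕ} (ha : x a ≠ 0) :
    0 < x a :=
  (hx.1 a).lt_of_ne' ha

lemma lagEval_nonneg (E : Finset (Finset ℕ)) {x : ℕ → ℝ} (hx : ∀ a, 0 ≤ x a) :
    0 ≤ lagEval E x :=
  sum_nonneg fun _ _ => prod_nonneg fun a _ => hx a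

lemma lagEval_le_card (E : Finset (Finset ℕ)) {x : ℕ → ℝ} (hx : Feasible x) :
    lagEval E x ≤ #E := by
  obtain ⟨hnonneg, S, hzero, hsum⟩ := hx
  have hle : ∀ a, x a ≤ 1 := fun a => by
    by_cases ha : a ∈ S
    · exact hsum ▸ single_le_sum (fun b _ => hnonneg b) ha
    · simp [hzero a ha]
  calc lagEval E x ≤ ∑ _ ∈ E, (1 : ℝ) :=
        sum_le_sum fun e _ => prod_le_one (fun a _ => hnonneg a) fun a _ => hle a
    _ = #E := by simp

lemma FeasibleOn.lagEval_le_lagrangian {n : ℕ} {x : ℕ → ℝ} (hx : FeasibleOn n x)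
    (E : Finset (Finset ℕ)) : lagEval E x ≤ lagrangian E :=
  le_csSup ⟨#E, by rintro _ ⟨y, hy, rfl⟩; exact lagEval_le_card E hy⟩
    ⟨x, ⟨hx.1, Icc 1 n, hx.2⟩, rfl⟩

lemma sum_mul_lagEval_nbhd {r n : ℕ} {E : Finset (Finset ℕ)} (hG : IsRGraphOn r n E)
    (x : ℕ → ℝ) : ∑ a ∈ Icc 1 n, x a * lagEval (nbhd E a) x = r * lagEval E x := by
  have hvertex : ∀ a, x a * lagEval (nbhd E a) x = ∑ e ∈ E, if a ∈ e then ∏ b ∈ e, x b else 0 :=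
    fun a => by
      rw [lagEval_nbhd, mul_sum, sum_filter]
      exact sum_congr rfl fun e _ => by split_ifs with ha <;> simp [mul_prod_erase e x, ha]
  rw [sum_congr rfl fun a _ => hvertex a, sum_comm, lagEval, mul_sum]
  refine sum_congr rfl fun e he => ?_
  rw [← sum_filter, sum_const, filter_mem_eq_inter, inter_eq_right.mpr (hG e he).2,
    (hG e he).1, nsmul_eq_mul]

section Optimal

variable {n : ℕ} {E : Finset (Finset ℕ)} {x : ℕ → ℝ}

lemma lagEval_nbhd_le_of_isMaxOn (hmax : IsMaxOn (lagEval E) {y | FeasibleOn n y} x)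
    (hx : FeasibleOn n x) {i j : ℕ} (hi : i ∈ Icc 1 n) (hxj : x j ≠ 0) (hij : i ≠ j) :
    lagEval (nbhd E i) x ≤ lagEval (nbhd E j) x := by
  by_contra! hlt
  set d := lagEval (nbhd E i) x - lagEval (nbhd E j) x
  set Q := lagEval (nbhd2 E i j) x
  have hd : 0 < d := sub_pos.mpr hlt
  have hQ : 0 ≤ Q := lagEval_nonneg _ hx.1
  -- a step so small that the linear gain `t * d` beats the quadratic loss `t ^ 2 * Q`
  set t := min (x j) (d / (Q + 1))
  have ht : 0 < t := lt_min (hx.pos hxj) (by positivity)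
  have htQ : t * Q < d := by
    have : t * (Q + 1) ≤ d := (le_div_iff₀ (by linarith)).mp (min_le_right _ _)
    nlinarith
  have hfeas : FeasibleOn n (transfer x i j t) :=
    feasibleOn_transfer hx hi (hx.mem_Icc hxj) hij (by linarith [hx.1 i]) (min_le_left _ _)
  have := isMaxOn_iff.mp hmax _ hfeas
  rw [lagEval_transfer E x hij] at this
  nlinarith

lemma lagEval_nbhd_eq_of_isMaxOn (hmax : IsMaxOn (lagEval E) {y | FeasibleOn n y} x)
    (hx : FeasibleOn n x) {i j : ℕ} (hxi : x i ≠ 0) (hxj : x j ≠ 0) :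
    lagEval (nbhd E i) x = lagEval (nbhd E j) x := by
  rcases eq_or_ne i j with rfl | hij
  · rfl
  exact (lagEval_nbhd_le_of_isMaxOn hmax hx (hx.mem_Icc hxi) hxj hij).antisymm
    (lagEval_nbhd_le_of_isMaxOn hmax hx (hx.mem_Icc hxj) hxi hij.symm)

lemma eq_mul_lagEval_of_lagEval_nbhd_eq {r : ℕ} (hG : IsRGraphOn r n E) (hx : FeasibleOn n x)
    {c : ℝ} (hc : ∀ a, x a ≠ 0 → lagEval (nbhd E a) x = c) : c = r * lagEval E x := by
  rw [← sum_mul_lagEval_nbhd hG, ← one_mul c, ← hx.2.2, sum_mul]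
  refine sum_congr rfl fun a _ => ?_
  by_cases ha : x a = 0
  · simp [ha]
  · rw [hc a ha]

end Optimal

lemma lagEval_transfer_eq_of_nbhd_eq (E : Finset (Finset ℕ)) (x : ℕ → ℝ) {i j : ℕ}
    (hij : i ≠ j) (hno : ∀ e ∈ E, ¬(i ∈ e ∧ j ∈ e))
    (heq : lagEval (nbhd E i) x = lagEval (nbhd E j) x) (t : ℝ) :
    lagEval E (transfer x i j t) = lagEval E x := by
  rw [lagEval_transfer E x hij, lagEval_nbhd2 E hij, filter_false_of_mem hno, heq]
  simp

lemma card_filter_transfer_ne_zero_lt {s : Finset ℕ} {x : ℕ → ℝ} {i j : ℕ} (hij : i ≠ j)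
    (hxi : x i ≠ 0) (hj : j ∈ s) (hxj : x j ≠ 0) :
    #{a ∈ s | transfer x i j (x j) a ≠ 0} < #{a ∈ s | x a ≠ 0} := by
  refine card_lt_card <| (ssubset_iff_of_subset fun a ha => ?_).mpr
    ⟨j, mem_filter.mpr ⟨hj, hxj⟩, by simp [transfer_apply_right hij]⟩
  obtain ⟨has, ha⟩ := mem_filter.mp ha
  refine mem_filter.mpr ⟨has, ?_⟩
  rcases eq_or_ne a i with rfl | hai
  · exact hxi
  rcases eq_or_ne a j with rfl | haj
  · simp [transfer_apply_right hij] at ha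
  rwa [transfer_apply_of_ne hai haj] at ha

theorem stmt7_general (r n k : ℕ) (E : Finset (Finset ℕ)) (hG : IsRGraphOn r n E)
    (x : ℕ → ℝ)
    (hfeas : FeasibleOn n x)
    (hopt : lagEval E x = lagrangian E)
    (hsupp : ∀ i : ℕ, x i ≠ 0 ↔ (1 ≤ i ∧ i ≤ k))
    (hmin : ∀ y : ℕ → ℝ, FeasibleOn n y → lagEval E y = lagrangian E →
      ((Finset.Icc 1 n).filter fun i => x i ≠ 0).card ≤
        ((Finset.Icc 1 n).filter fun i => y i ≠ 0).card)
    (i j : ℕ) (hi : i ∈ Finset.Icc 1 k) (hj : j ∈ Finset.Icc 1 k) (hij : i ≠ j) :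
    lagEval (nbhd E i) x = r * lagrangian E ∧
      lagEval (nbhd E j) x = r * lagrangian E ∧
      ∃ e ∈ E, i ∈ e ∧ j ∈ e := by
  have hxi : x i ≠ 0 := (hsupp i).mpr (mem_Icc.mp hi)
  have hxj : x j ≠ 0 := (hsupp j).mpr (mem_Icc.mp hj)
  have hmax : IsMaxOn (lagEval E) {y | FeasibleOn n y} x :=
    isMaxOn_iff.mpr fun y hy => hopt ▸ hy.lagEval_le_lagrangian E
  have hL : ∀ a, x a ≠ 0 → lagEval (nbhd E a) x = lagEval (nbhd E i) x :=
    fun a ha => lagEval_nbhd_eq_of_isMaxOn hmax hfeas ha hxi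
  have hLi : lagEval (nbhd E i) x = r * lagrangian E :=
    hopt ▸ eq_mul_lagEval_of_lagEval_nbhd_eq hG hfeas hL
  refine ⟨hLi, (hL j hxj).trans hLi, ?_⟩
  by_contra! hno
  have hy := feasibleOn_transfer hfeas (hfeas.mem_Icc hxi) (hfeas.mem_Icc hxj) hij
    (t := x j) (by linarith [hfeas.1 i, hfeas.1 j]) le_rfl
  have hyopt : lagEval E (transfer x i j (x j)) = lagrangian E := by
    rw [lagEval_transfer_eq_of_nbhd_eq E x hij (fun e he h => hno e he h.1 h.2)
      (hL j hxj).symm, hopt]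
  exact (card_filter_transfer_ne_zero_lt hij hxi (hfeas.mem_Icc hxj) hxj).not_ge
    (hmin _ hy hyopt)

/-- Frankl–Rödl: if `x` is an optimal weighting for an r-graph `G` on `[n]` whose
nonzero weights are exactly `x_1, …, x_k` and whose number of nonzero entries is
minimal among all optimal weightings, then for all distinct `i, j ∈ [k]`:
(a) λ(E_i, x) = λ(E_j, x) = r·λ(G), and (b) some edge of `G` contains both `i` and `j`. -/
theorem stmt7 (r n k : ℕ) (E : Finset (Finset ℕ)) (hG : IsRGraphOn r n E)
    (hk : k ≤ n) (x : ℕ → ℝ)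
    (hfeas : FeasibleOn n x)
    (hopt : lagEval E x = lagrangian E)
    (hsupp : ∀ i : ℕ, x i ≠ 0 ↔ (1 ≤ i ∧ i ≤ k))
    (hmin : ∀ y : ℕ → ℝ, FeasibleOn n y → lagEval E y = lagrangian E →
      ((Finset.Icc 1 n).filter fun i => x i ≠ 0).card ≤
        ((Finset.Icc 1 n).filter fun i => y i ≠ 0).card)
    (i j : ℕ) (hi : i ∈ Finset.Icc 1 k) (hj : j ∈ Finset.Icc 1 k) (hij : i ≠ j) :
    lagEval (nbhd E i) x = r * lagrangian E ∧
      lagEval (nbhd E j) x = r * lagrangian E ∧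
      ∃ e ∈ E, i ∈ e ∧ j ∈ e :=
  stmt7_general r n k E hG x hfeas hopt hsupp hmin i j hi hj hij
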